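/- arXiv:1507.06010 — 2 statements merged into one kernel-verified Lean document; each statement's English description precedes it below -/
import Mathlib

section
/- For every logic program P over Σ, every clause C over Σ, and every idempotent substitution σ over Σ, and relative to a fixed scheme for choosing the fresh Tier 2 variables and for renaming apart the variables of program clauses, there exists a unique pair (dom(T), T) with dom(T) a non-empty tree language and T : dom(T) → Term(Σ) ∪ Clause(Σ) ∪ V_R satisfying conditions (1)–(4) of the definition of the rewriting tree rew(P, C, σ). -/
/-!
Conditions (1)–(4) determine the label of every child `wi` from the label of its parent `w`
and the address `wi`, so there is exactly one such labelling: define it by recursion on the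
length of the address, and compare any other one with it by induction. An and-node has one
child per program clause, an or-node labelled by a clause one child per body atom, and every
other node none; so the children of each node form an initial segment of `ℕ`, which gives
the tree-language properties of the domain.
-/

namespace T3C

/-- A (finitely branching) tree language: prefix-closed, closed under smaller
sibling indices, and finitely branching. -/
def IsTreeLang (L : Set (List ℕ)) : Prop :=
  (∀ (w : List ℕ) (j : ℕ), w ++ [j] ∈ L → w ∈ L) ∧
  (∀ (w : List ℕ) (i j : ℕ), w ++ [j] ∈ L → i < j → w ++ [i] ∈ L) ∧
  (∀ w ∈ L, { i : ℕ | w ++ [i] ∈ L }.Finite)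

/-- A term tree over a signature `Sig` (with arity function `ar`) and
variables `V` (each of arity `0`): a function from a non-empty tree language
to `Sig ⊕ V` satisfying the arity condition.  Nodes outside the domain are
labelled `none`. -/
structure Tm (Sig V : Type) (ar : Sig → ℕ) where
  label : List ℕ → Option (Sig ⊕ V)
  root : label [] ≠ none
  tl : IsTreeLang { w | label w ≠ none }
  arity : ∀ w a, label w = some a →
    { i : ℕ | label (w ++ [i]) ≠ none }.ncard = Sum.elim ar (fun _ => 0) a

variable {Sig V : Type} {ar : Sig → ℕ}

/-- A term tree is finite if its domain tree language is finite. -/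
def Tm.Fin (t : Tm Sig V ar) : Prop := { w | t.label w ≠ none }.Finite

/-- A substitution: a total function from variables to finite term trees. -/
structure Subst (Sig V : Type) (ar : Sig → ℕ) where
  toFun : V → Tm Sig V ar
  fin : ∀ X, (toFun X).Fin

/-- Auxiliary function computing the label of `σ(t)` at `u ++ v`, scanning
the word for the first variable node of `t`. -/
def subAppAux (σ : V → Tm Sig V ar) (t : Tm Sig V ar) :
    List ℕ → List ℕ → Option (Sig ⊕ V)
  | u, [] =>
    match t.label u with
    | some (Sum.inr X) => (σ X).label []
    | o => o
  | u, i :: v =>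
    match t.label u with
    | some (Sum.inr X) => (σ X).label (i :: v)
    | _ => subAppAux σ t (u ++ [i]) v

/-- `sapp σ t` is the label function of the application `σ(t)` of the
substitution `σ` to the term tree `t`. -/
def sapp (σ : Subst Sig V ar) (t : Tm Sig V ar) : List ℕ → Option (Sig ⊕ V) :=
  subAppAux σ.toFun t []

/-- `σ` is a matcher of `t` against `u` iff `σ(t) = u`. -/
def IsMatcher (σ : Subst Sig V ar) (t u : Tm Sig V ar) : Prop :=
  sapp σ t = u.label

/-- `σ` is a unifier of `t` and `u` iff `σ(t) = σ(u)`. -/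
def IsUnifier (σ : Subst Sig V ar) (t u : Tm Sig V ar) : Prop :=
  sapp σ t = sapp σ u

/-- `σ₁` is more general than `σ₂` iff `σσ₁ = σ₂` for some substitution `σ`. -/
def MoreGen (σ₁ σ₂ : Subst Sig V ar) : Prop :=
  ∃ σ : Subst Sig V ar, ∀ X, sapp σ (σ₁.toFun X) = (σ₂.toFun X).label

/-- A most general matcher of `t` against `u`. -/
def IsMGM (θ : Subst Sig V ar) (t u : Tm Sig V ar) : Prop :=
  IsMatcher θ t u ∧ ∀ θ' : Subst Sig V ar, IsMatcher θ' t u → MoreGen θ θ'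

/-- A most general unifier of `t` and `u`. -/
def IsMGU (σ : Subst Sig V ar) (t u : Tm Sig V ar) : Prop :=
  IsUnifier σ t u ∧ ∀ σ' : Subst Sig V ar, IsUnifier σ' t u → MoreGen σ σ'

/-- Idempotence: `σσ = σ`. -/
def Idem (σ : Subst Sig V ar) : Prop :=
  ∀ X, sapp σ (σ.toFun X) = (σ.toFun X).label

open scoped Classical

/-- The term tree consisting of a single variable node. -/
def varTm (X : V) : Tm Sig V ar where
  label := fun w => if w = [] then some (Sum.inr X) else none
  root := by simp
  tl := by
    refine ⟨?_, ?_, ?_⟩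
    · intro w j hwj
      exfalso
      simp only [Set.mem_setOf_eq] at hwj
      rw [if_neg (by simp)] at hwj
      exact hwj rfl
    · intro w i j hwj hij
      exfalso
      simp only [Set.mem_setOf_eq] at hwj
      rw [if_neg (by simp)] at hwj
      exact hwj rfl
    · intro w _
      apply Set.Finite.subset Set.finite_empty
      intro i hi
      simp only [Set.mem_setOf_eq] at hi
      rw [if_neg (by simp)] at hi
      exact absurd rfl hi
  arity := by
    intro w a hwa
    by_cases hw : w = []
    · subst hw
      simp only [if_pos rfl] at hwa
      cases Option.some.inj hwa
      have hset : { i : ℕ |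
          (fun w => if w = ([] : List ℕ) then some (Sum.inr X : Sig ⊕ V) else none)
            (([] : List ℕ) ++ [i]) ≠ none } = ∅ := by
        ext i
        simp
      rw [hset]
      simp
    · simp only [if_neg hw] at hwa
      exact absurd hwa (by simp)

lemma varTm_fin (X : V) : (varTm X : Tm Sig V ar).Fin := by
  apply Set.Finite.subset (Set.finite_singleton ([] : List ℕ))
  intro w hw
  simp only [Set.mem_setOf_eq, varTm] at hw
  by_cases h : w = []
  · simpa using h
  · rw [if_neg h] at hw; exact absurd rfl hw

/-- The identity substitution. -/
def idS : Subst Sig V ar := ⟨fun X => varTm X, fun X => varTm_fin X⟩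

/-- A clause `head ← B₀, …, Bₙ`.  (Goal clauses are clauses whose head is built
from the reserved goal symbol `?` of the signature.) -/
structure Clause (Sig V : Type) (ar : Sig → ℕ) where
  head : Tm Sig V ar
  body : List (Tm Sig V ar)

/-- A logic program: a function from `{0, …, n} ⊆ ℕ` to (non-goal) clauses,
encoded as a non-empty list of clauses. -/
structure Prog (Sig V : Type) (ar : Sig → ℕ) where
  clauses : List (Clause Sig V ar)
  ne : clauses ≠ []

/-- Application of a substitution to a term tree, as a term tree (the label
function of the result is `sapp σ t`). -/
noncomputable def appT (σ : Subst Sig V ar) (t : Tm Sig V ar) : Tm Sig V ar :=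
  if h : ∃ t' : Tm Sig V ar, t'.label = sapp σ t then h.choose else t

/-- Application of a substitution to a clause, homomorphically. -/
noncomputable def appC (σ : Subst Sig V ar) (C : Clause Sig V ar) : Clause Sig V ar :=
  ⟨appT σ C.head, C.body.map (appT σ)⟩

/-- Composition of substitutions: `(compS σ' σ)(X) = σ'(σ(X))`. -/
noncomputable def compS (σ' σ : Subst Sig V ar) : Subst Sig V ar :=
  if h : ∃ τ : Subst Sig V ar, ∀ X, (τ.toFun X).label = sapp σ' (σ.toFun X) then
    h.choose
  else σ'

/-- The substitution renaming variables along `ρ`. -/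
def renSubst (ρ : V → V) : Subst Sig V ar := ⟨fun X => varTm (ρ X), fun X => varTm_fin (ρ X)⟩

/-- `C'` is obtained from `C` by (injectively) renaming its variables. -/
def IsRenaming (C C' : Clause Sig V ar) : Prop :=
  ∃ ρ : V → V, Function.Injective ρ ∧
    C'.head.label = sapp (renSubst ρ) C.head ∧
    C'.body.length = C.body.length ∧
    ∀ (j : ℕ) (t t' : Tm Sig V ar), C.body[j]? = some t → C'.body[j]? = some t' →
      t'.label = sapp (renSubst ρ) t

/-- Labels of nodes of rewriting trees: term trees (and-nodes), clauses
(or-nodes), or Tier 2 variables from `VR` (variable or-nodes). -/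
abbrev RLab (Sig V : Type) (ar : Sig → ℕ) (VR : Type) : Type :=
  Tm Sig V ar ⊕ (Clause Sig V ar ⊕ VR)

/-- A fixed scheme of proof-search data: a deterministic most general matcher
and most general unifier algorithm, a renaming-apart scheme for program
clauses (renaming determined by the node at which the clause is used, as in
the renaming-apart convention), and a scheme of fresh Tier 2 variables
(likewise determined by the node). -/
structure Scheme (Sig V : Type) (ar : Sig → ℕ) (VR : Type) where
  mgm : Tm Sig V ar → Tm Sig V ar → Option (Subst Sig V ar)
  mgm_sound : ∀ t u θ, mgm t u = some θ → IsMGM θ t u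
  mgm_complete : ∀ t u, (∃ θ : Subst Sig V ar, IsMatcher θ t u) → (mgm t u).isSome
  mgu : Tm Sig V ar → Tm Sig V ar → Option (Subst Sig V ar)
  mgu_sound : ∀ t u σ, mgu t u = some σ → IsMGU σ t u
  mgu_complete : ∀ t u, (∃ σ : Subst Sig V ar, IsUnifier σ t u) → (mgu t u).isSome
  ren : List ℕ → Clause Sig V ar → Clause Sig V ar
  ren_renaming : ∀ w C, IsRenaming C (ren w C)
  fresh : List ℕ → VR
  fresh_inj : Function.Injective fresh

variable {VR : Type}

/-- Conditions (1)–(4) of the definition of the rewriting tree `rew(P, C, σ)`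
(Definition 4.1): (1) the root is labelled `σ(C)` and its children are the
body of `σ(C)`; (2) or-nodes are clauses or Tier 2 variables, Tier 2 variable
nodes are leaves, and the children of an or-node labelled by a clause `B`
(which is `σ(θ(P(i)))` by (3)) are the body terms `σ(θ(P(i)(j)))` of `B`;
(3) each and-node `T(w)` (a term) has, for every clause index `i` of `P`, the
child `T(wi) = σ(θ(P(i)))` if `head(P(i))` matches `T(w)` via the mgm `θ`
(with `P(i)` renamed apart at node `wi`), and a fresh Tier 2 variable
(determined by the node `wi`) otherwise; (4) no other words are in the
domain. -/
def RewSpec (S : Scheme Sig V ar VR) (P : Prog Sig V ar) (C : Clause Sig V ar)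
    (σ : Subst Sig V ar) (T : List ℕ → Option (RLab Sig V ar VR)) : Prop :=
  T [] = some (Sum.inr (Sum.inl (appC σ C))) ∧
  (∀ (w : List ℕ) (B : Clause Sig V ar), T w = some (Sum.inr (Sum.inl B)) →
    ∀ j : ℕ, T (w ++ [j]) = (B.body[j]?).map Sum.inl) ∧
  (∀ (w : List ℕ) (X : VR), T w = some (Sum.inr (Sum.inr X)) →
    ∀ i : ℕ, T (w ++ [i]) = none) ∧
  (∀ (w : List ℕ) (t : Tm Sig V ar), T w = some (Sum.inl t) →
    ∀ i : ℕ, T (w ++ [i]) =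
      match P.clauses[i]? with
      | none => none
      | some Ci =>
        match S.mgm (S.ren (w ++ [i]) Ci).head t with
        | some θ => some (Sum.inr (Sum.inl (appC σ (appC θ (S.ren (w ++ [i]) Ci)))))
        | none => some (Sum.inr (Sum.inr (S.fresh (w ++ [i]))))) ∧
  (∀ (w : List ℕ) (i : ℕ), T (w ++ [i]) ≠ none → T w ≠ none)

/-- The rewriting tree `rew(P, C, σ)` (as a label function). -/
noncomputable def rew (S : Scheme Sig V ar VR) (P : Prog Sig V ar)
    (C : Clause Sig V ar) (σ : Subst Sig V ar) : List ℕ → Option (RLab Sig V ar VR) :=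
  if h : ∃ T, RewSpec S P C σ T then h.choose else fun _ => none

/-- Application of a substitution to the label of a node of a rewriting tree
(identity on Tier 2 variables). -/
noncomputable def rlabApp (σ : Subst Sig V ar) :
    RLab Sig V ar VR → RLab Sig V ar VR
  | Sum.inl t => Sum.inl (appT σ t)
  | Sum.inr (Sum.inl B) => Sum.inr (Sum.inl (appC σ B))
  | Sum.inr (Sum.inr X) => Sum.inr (Sum.inr X)

/-- Definition 4.4: the application `σ'(T)` of a substitution `σ'` to a
rewriting tree `T = rew(P, C, σ)`: on and-nodes and non-variable or-nodes it
acts label-wise; below a Tier 2 variable or-node `T(wi)` whose parent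
and-node is labelled `t`, if the mgm `θ` of `head(P(i))` (renamed apart at
`wi`) against `σ'(t) = (σ'(T))(w)` exists then `(σ'(T))(wiv) =
rew(P, θ(P(i)), σ'σ)(v)`, and otherwise `(σ'(T))(wi) = T(wi)` is unchanged. -/
noncomputable def rsub (S : Scheme Sig V ar VR) (P : Prog Sig V ar)
    (σ' σ : Subst Sig V ar) (T : List ℕ → Option (RLab Sig V ar VR)) :
    List ℕ → Option (RLab Sig V ar VR) := fun w =>
  if h : ∃ p : List ℕ × ℕ × List ℕ × Tm Sig V ar,
      w = (p.1 ++ [p.2.1]) ++ p.2.2.1 ∧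
      (∃ X : VR, T (p.1 ++ [p.2.1]) = some (Sum.inr (Sum.inr X))) ∧
      T p.1 = some (Sum.inl p.2.2.2) then
    match P.clauses[h.choose.2.1]? with
    | none => T w
    | some Ci =>
      match S.mgm (S.ren (h.choose.1 ++ [h.choose.2.1]) Ci).head (appT σ' h.choose.2.2.2) with
      | some θ =>
          rew S P (appC θ (S.ren (h.choose.1 ++ [h.choose.2.1]) Ci)) (compS σ' σ) h.choose.2.2.1
      | none => T w
  else (T w).map (rlabApp σ')

variable {S : Scheme Sig V ar VR} {P : Prog Sig V ar} {C : Clause Sig V ar} {σ : Subst Sig V ar}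

/-- The label of the child `w ++ [i]`, as prescribed by (2) and (3), given the label of `w`. -/
noncomputable def childLabel (S : Scheme Sig V ar VR) (P : Prog Sig V ar)
    (σ : Subst Sig V ar) (w : List ℕ) (i : ℕ) :
    Option (RLab Sig V ar VR) → Option (RLab Sig V ar VR)
  | none => none
  | some (Sum.inl t) =>
      match P.clauses[i]? with
      | none => none
      | some Ci =>
        match S.mgm (S.ren (w ++ [i]) Ci).head t with
        | some θ => some (Sum.inr (Sum.inl (appC σ (appC θ (S.ren (w ++ [i]) Ci)))))
        | none => some (Sum.inr (Sum.inr (S.fresh (w ++ [i]))))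
  | some (Sum.inr (Sum.inl B)) => (B.body[i]?).map Sum.inl
  | some (Sum.inr (Sum.inr _)) => none

def childCount (P : Prog Sig V ar) : Option (RLab Sig V ar VR) → ℕ
  | some (Sum.inl _) => P.clauses.length
  | some (Sum.inr (Sum.inl B)) => B.body.length
  | _ => 0

lemma childLabel_ne_none_iff {w : List ℕ} {i : ℕ} {o : Option (RLab Sig V ar VR)} :
    childLabel S P σ w i o ≠ none ↔ i < childCount P o := by
  rcases o with _ | t | B | X
  · simp [childLabel, childCount]
  · rcases hi : P.clauses[i]? with _ | Ci
    · simpa [childLabel, childCount, hi] using List.getElem?_eq_none_iff.mp hi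
    · simp only [childLabel, childCount, hi]
      exact iff_of_true (by split <;> simp) (List.getElem?_eq_some_iff.mp hi).1
  · simp [childLabel, childCount]
  · simp [childLabel, childCount]

/-- The rewriting tree, addressed by reversed words so that it is structurally recursive. -/
noncomputable def rewTreeRev (S : Scheme Sig V ar VR) (P : Prog Sig V ar)
    (C : Clause Sig V ar) (σ : Subst Sig V ar) : List ℕ → Option (RLab Sig V ar VR)
  | [] => some (Sum.inr (Sum.inl (appC σ C)))
  | i :: w => childLabel S P σ w.reverse i (rewTreeRev S P C σ w)

noncomputable def rewTree (S : Scheme Sig V ar VR) (P : Prog Sig V ar)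
    (C : Clause Sig V ar) (σ : Subst Sig V ar) (w : List ℕ) : Option (RLab Sig V ar VR) :=
  rewTreeRev S P C σ w.reverse

lemma rewTree_snoc (w : List ℕ) (i : ℕ) :
    rewTree S P C σ (w ++ [i]) = childLabel S P σ w i (rewTree S P C σ w) := by
  simp [rewTree, rewTreeRev]

lemma RewSpec.label_snoc {T : List ℕ → Option (RLab Sig V ar VR)} (hT : RewSpec S P C σ T)
    (w : List ℕ) (i : ℕ) : T (w ++ [i]) = childLabel S P σ w i (T w) := by
  obtain ⟨-, hclause, hvar, hterm, hprefix⟩ := hT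
  rcases hw : T w with _ | t | B | X
  · exact not_not.mp fun hwi => hprefix w i hwi hw
  · exact hterm w t hw i
  · exact hclause w B hw i
  · exact hvar w X hw i

lemma rewSpec_rewTree : RewSpec S P C σ (rewTree S P C σ) := by
  refine ⟨rfl, ?_, ?_, ?_, ?_⟩
  · intro w B hB j
    rw [rewTree_snoc, hB]; rfl
  · intro w X hX i
    rw [rewTree_snoc, hX]; rfl
  · intro w t ht i
    rw [rewTree_snoc, ht]; rfl
  · intro w i hwi hw
    rw [rewTree_snoc, hw] at hwi
    exact hwi rfl

lemma RewSpec.eq_rewTree {T : List ℕ → Option (RLab Sig V ar VR)} (hT : RewSpec S P C σ T) :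
    T = rewTree S P C σ := by
  funext w
  induction w using List.reverseRecOn with
  | nil => exact hT.1
  | append_singleton w i ih => rw [hT.label_snoc, rewSpec_rewTree.label_snoc, ih]

lemma RewSpec.label_snoc_ne_none_iff {T : List ℕ → Option (RLab Sig V ar VR)}
    (hT : RewSpec S P C σ T) (w : List ℕ) (i : ℕ) :
    T (w ++ [i]) ≠ none ↔ i < childCount P (T w) := by
  rw [hT.label_snoc, childLabel_ne_none_iff]

lemma RewSpec.isTreeLang {T : List ℕ → Option (RLab Sig V ar VR)} (hT : RewSpec S P C σ T) :
    IsTreeLang { w | T w ≠ none } := by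
  refine ⟨hT.2.2.2.2, fun w i j hwj hij => ?_, fun w _ => ?_⟩
  · exact (hT.label_snoc_ne_none_iff w i).2 (hij.trans ((hT.label_snoc_ne_none_iff w j).1 hwj))
  · exact (Set.finite_Iio _).subset fun i hi => (hT.label_snoc_ne_none_iff w i).1 hi

end T3C

open T3C in
theorem statement11_general {Sig V VR : Type} {ar : Sig → ℕ}
    (S : Scheme Sig V ar VR) (P : Prog Sig V ar) (C : Clause Sig V ar)
    (σ : Subst Sig V ar) :
    (∃! T : List ℕ → Option (RLab Sig V ar VR), RewSpec S P C σ T) ∧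
    (∀ T : List ℕ → Option (RLab Sig V ar VR), RewSpec S P C σ T →
      IsTreeLang { w | T w ≠ none } ∧ ({ w | T w ≠ none } : Set (List ℕ)).Nonempty) :=
  ⟨⟨rewTree S P C σ, rewSpec_rewTree, fun _ hT => hT.eq_rewTree⟩,
    fun _ hT => ⟨hT.isTreeLang, [], by simp [hT.1]⟩⟩

open T3C in
/-- for every logic program `P`, clause `C`, and idempotent
substitution `σ`, and relative to a fixed scheme (for mgms, for renaming
program clauses apart, and for choosing fresh Tier 2 variables), there is a
unique function `T` satisfying conditions (1)–(4) of the definition of the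
rewriting tree `rew(P, C, σ)`; moreover its domain is a non-empty tree
language. -/
theorem statement11 {Sig V VR : Type} [Nonempty Sig] [Countable V] [Infinite V]
    [Countable VR] [Infinite VR] {ar : Sig → ℕ}
    (S : Scheme Sig V ar VR) (P : Prog Sig V ar) (C : Clause Sig V ar)
    (σ : Subst Sig V ar) (hσ : Idem σ) :
    (∃! T : List ℕ → Option (RLab Sig V ar VR), RewSpec S P C σ T) ∧
    (∀ T : List ℕ → Option (RLab Sig V ar VR), RewSpec S P C σ T →
      IsTreeLang { w | T w ≠ none } ∧ ({ w | T w ≠ none } : Set (List ℕ)).Nonempty) :=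
  statement11_general S P C σ
end

section
/- For every logic program P over Σ and every clause C over Σ, relative to a fixed scheme for choosing fresh variables, there exists a unique function D : dom(D) → Rew^ω(P) on a tree language dom(D) such that D(ε) = rew(P, C, id) and, for every w ∈ dom(D) and every i in arity(D(w)) with i = pos(k), wi ∈ dom(D) and D(wi) = Trans(P, D(w), X_k); that is, the derivation tree der(P, C) exists and is unique up to renaming. -/
namespace T3C

variable {Sig V : Type} {ar : Sig → ℕ}

open scoped Classical

variable {VR : Type}

/-- The Tier 2 variable `X` occurs in the rewriting tree `T`. -/
def OccursIn (T : List ℕ → Option (RLab Sig V ar VR)) (X : VR) : Prop :=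
  ∃ w : List ℕ, T w = some (Sum.inr (Sum.inr X))

/-- `e : ℕ → Option VR` enumerates the Tier 2 variables occurring in `T`
without repetition: it is (the inverse of) a bijection `pos` from the set
`indices(T)` of (indices of) `V_R`-variables of `T` onto the (possibly
infinite) arity of `T`. -/
def Enumerates (T : List ℕ → Option (RLab Sig V ar VR)) (e : ℕ → Option VR) : Prop :=
  (∀ (i : ℕ) (X : VR), e i = some X → OccursIn T X) ∧
  (∀ X : VR, OccursIn T X → ∃! i : ℕ, e i = some X) ∧
  (∀ i j : ℕ, i ≤ j → e i = none → e j = none)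

/-- Definition 4.6: the transition `Trans(P, T, X)` for `T = rew(P, C, σ')`
and a Tier 2 variable `X = T(wi)` with parent and-node `T(w)`: if the
external resolvent (the mgu of `head(P(i))`, renamed apart at `wi`, and
`T(w)`) is null then the result is the empty tree (`none`); otherwise the
result is (the base substitution `σσ'` of) the rewriting tree
`T_X = rew(P, C, σσ')`. -/
noncomputable def trans (S : Scheme Sig V ar VR) (P : Prog Sig V ar)
    (C : Clause Sig V ar) (σ' : Subst Sig V ar) (X : VR) :
    Option (Subst Sig V ar) :=
  if h : ∃ p : List ℕ × ℕ × Tm Sig V ar,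
      rew S P C σ' (p.1 ++ [p.2.1]) = some (Sum.inr (Sum.inr X)) ∧
      rew S P C σ' p.1 = some (Sum.inl p.2.2) then
    match P.clauses[h.choose.2.1]? with
    | none => none
    | some Ci =>
        (S.mgu (S.ren (h.choose.1 ++ [h.choose.2.1]) Ci).head h.choose.2.2).map
          (fun σ => compS σ σ')
  else none

/-- Definition 4.7: the derivation tree `der(P, C)`.  A node of the
derivation tree is encoded by the base substitution of the rewriting tree
labelling it (`some (some σw)` encodes the rewriting tree `rew(P, C, σw)`,
`some none` encodes the empty rewriting tree, and `none` means the node is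
outside the domain): the root is the rewriting tree `rew(P, C, id)`, and for
every node `w` and every `i` in the arity of `D(w)` with `i = pos k`, the
child `D(wi)` is `Trans(P, D(w), X_k)`, where `X_k` is the `k`-th Tier 2
variable of `D(w)` under the enumeration scheme `enum`. -/
def DerSpec (S : Scheme Sig V ar VR) (P : Prog Sig V ar) (C : Clause Sig V ar)
    (enum : (List ℕ → Option (RLab Sig V ar VR)) → ℕ → Option VR)
    (D : List ℕ → Option (Option (Subst Sig V ar))) : Prop :=
  D [] = some (some idS) ∧
  (∀ (w : List ℕ) (σw : Subst Sig V ar), D w = some (some σw) → ∀ i : ℕ,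
    D (w ++ [i]) = (enum (rew S P C σw) i).map (fun X => trans S P C σw X)) ∧
  (∀ w : List ℕ, D w = some none → ∀ i : ℕ, D (w ++ [i]) = none) ∧
  (∀ (w : List ℕ) (i : ℕ), D (w ++ [i]) ≠ none → D w ≠ none)

end T3C

/-!
Each node of a derivation tree is determined by its parent: the label of `w ++ [i]` is obtained
from the label of `w` by one transition step, and nothing hangs below an empty rewriting tree or
outside the domain. Hence `der(P, C)` is the unique solution of a recursion along words, namely
the left fold of that step over the word, starting from `rew(P, C, id)`.
-/

theorem existsUnique_foldl_bind {β : Type*} (r : β) (g : ℕ → β → Option β) :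
    ∃! D : List ℕ → Option β, D [] = some r ∧ ∀ w i, D (w ++ [i]) = (D w).bind (g i) := by
  refine ⟨fun w => w.foldl (fun o i => o.bind (g i)) (some r), ⟨rfl, fun w i => ?_⟩, ?_⟩
  · simp only [List.foldl_append, List.foldl_cons, List.foldl_nil]
  · rintro D ⟨hroot, hchild⟩
    funext w
    induction w using List.reverseRecOn with
    | nil => exact hroot
    | append_singleton w i ih =>
      simp only [hchild, ih, List.foldl_append, List.foldl_cons, List.foldl_nil]

namespace T3C

variable {Sig V VR : Type} {ar : Sig → ℕ}

noncomputable def derChild (S : Scheme Sig V ar VR) (P : Prog Sig V ar) (C : Clause Sig V ar)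
    (enum : (List ℕ → Option (RLab Sig V ar VR)) → ℕ → Option VR) (i : ℕ)
    (o : Option (Subst Sig V ar)) : Option (Option (Subst Sig V ar)) :=
  o.bind fun σ => (enum (rew S P C σ) i).map (trans S P C σ)

theorem derSpec_iff (S : Scheme Sig V ar VR) (P : Prog Sig V ar) (C : Clause Sig V ar)
    (enum : (List ℕ → Option (RLab Sig V ar VR)) → ℕ → Option VR)
    (D : List ℕ → Option (Option (Subst Sig V ar))) :
    DerSpec S P C enum D ↔
      D [] = some (some idS) ∧ ∀ w i, D (w ++ [i]) = (D w).bind (derChild S P C enum i) := by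
  constructor
  · rintro ⟨hroot, hsome, hnone, hdom⟩
    refine ⟨hroot, fun w i => ?_⟩
    rcases hw : D w with _ | _ | σ
    · by_contra hne
      exact hdom w i hne hw
    · exact hnone w hw i
    · exact hsome w σ hw i
  · rintro ⟨hroot, hchild⟩
    refine ⟨hroot, fun w σ hw i => ?_, fun w hw i => ?_, fun w i hne hw => hne ?_⟩ <;>
      simp only [hchild, hw, Option.bind_some, Option.bind_none, derChild]

end T3C

open T3C in
theorem statement13_general {Sig V VR : Type} {ar : Sig → ℕ}
    (S : Scheme Sig V ar VR) (P : Prog Sig V ar) (C : Clause Sig V ar)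
    (enum : (List ℕ → Option (RLab Sig V ar VR)) → ℕ → Option VR) :
    ∃! D : List ℕ → Option (Option (Subst Sig V ar)), DerSpec S P C enum D := by
  simpa only [derSpec_iff] using existsUnique_foldl_bind (some idS) (derChild S P C enum)

open T3C in
/-- for every logic program `P` and clause `C`, relative to a
fixed scheme (for mgms/mgus, renaming apart, fresh Tier 2 variables, and an
enumeration `enum` of the Tier 2 variables of each rewriting tree), there
exists a unique derivation tree `D = der(P, C)`: `D(ε) = rew(P, C, id)` and,
for every node `w` and every `i` in the arity of `D(w)` with `i = pos k`,
`D(wi) = Trans(P, D(w), X_k)`. -/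
theorem statement13 {Sig V VR : Type} [Nonempty Sig] [Countable V] [Infinite V]
    [Countable VR] [Infinite VR] {ar : Sig → ℕ}
    (S : Scheme Sig V ar VR) (P : Prog Sig V ar) (C : Clause Sig V ar)
    (enum : (List ℕ → Option (RLab Sig V ar VR)) → ℕ → Option VR)
    (henum : ∀ T : List ℕ → Option (RLab Sig V ar VR), Enumerates T (enum T)) :
    ∃! D : List ℕ → Option (Option (Subst Sig V ar)), DerSpec S P C enum D :=
  statement13_general S P C enum
end
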